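/- For every integer r ≥ 0 and n = 3^(2^r) + 1, there exists a 3-laminar family of subsets of [n] of cardinality at least 1 + binom(n,1) + binom(n,2) + binom(n,3) · (1 + Σ_{i=0}^{r} 1/binom(3^(2^i) + 1, 3)). -/

import Mathlib

/-!
Take all sets of size at most `3` together with a family `𝓖 r` of larger sets, where `𝓖 0 = {[4]}`.
For `q = 3 ^ 2 ^ r`, the Baer sublines of the projective line over `𝔽_{q²}` (the images of the
projective line over `𝔽_q` under `PGL₂(𝔽_{q²})`) form a Steiner system `S(3, q + 1, q² + 1)`, the
Miquelian inversive plane; `𝓖 (r + 1)` consists of the whole point set and a copy of `𝓖 r` inside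
every subline. Two sublines share at most two points, so the copies do not interfere, and since
every triple lies on a subline there are at least `C(q² + 1, 3) / C(q + 1, 3)` of them, which is
the recursion behind the bound.

Three points lie on a unique subline: normalise their representatives to `w₁, w₂, w₁ + w₂`; any
subline through them is then the set of points `[a w₁ + b w₂]` with `a, b ∈ 𝔽_q`.
-/

open Finset

section Laminar

variable {α : Type*} [DecidableEq α]

def IsLaminar (t : ℕ) (𝓕 : Finset (Finset α)) : Prop :=
  ∀ A ∈ 𝓕, ∀ B ∈ 𝓕, t ≤ #(A ∩ B) → A ⊆ B ∨ B ⊆ A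

lemma subset_of_card_le_card_inter {t : ℕ} {A B : Finset α} (hA : #A ≤ t)
    (h : t ≤ #(A ∩ B)) : A ⊆ B :=
  inter_eq_left.1 (eq_of_subset_of_card_le inter_subset_left (hA.trans h))

lemma IsLaminar.union_of_card_le {t : ℕ} {𝓕 𝓢 : Finset (Finset α)} (h𝓕 : IsLaminar t 𝓕)
    (h𝓢 : ∀ A ∈ 𝓢, #A ≤ t) : IsLaminar t (𝓕 ∪ 𝓢) := by
  intro A hA B hB hAB
  rcases mem_union.1 hA with hA | hA
  · rcases mem_union.1 hB with hB | hB
    · exact h𝓕 A hA B hB hAB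
    · exact .inr (subset_of_card_le_card_inter (h𝓢 B hB) (inter_comm A B ▸ hAB))
  · exact .inl (subset_of_card_le_card_inter (h𝓢 A hA) hAB)

lemma IsLaminar.insert_univ [Fintype α] {t : ℕ} {𝓕 : Finset (Finset α)} (h𝓕 : IsLaminar t 𝓕) :
    IsLaminar t (insert univ 𝓕) := by
  intro A hA B hB hAB
  rcases mem_insert.1 hA with rfl | hA
  · exact .inr (subset_univ B)
  rcases mem_insert.1 hB with rfl | hB
  · exact .inl (subset_univ A)
  exact h𝓕 A hA B hB hAB

lemma IsLaminar.image_map {β : Type*} [DecidableEq β] {t : ℕ} {𝓕 : Finset (Finset α)}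
    (h𝓕 : IsLaminar t 𝓕) (f : α ↪ β) : IsLaminar t (𝓕.image (·.map f)) := by
  simp only [IsLaminar, forall_mem_image, ← map_inter, card_map, map_subset_map]
  exact h𝓕

lemma IsLaminar.biUnion {t : ℕ} {𝓑 : Finset (Finset α)} {𝓒 : Finset α → Finset (Finset α)}
    (h𝓑 : ∀ B ∈ 𝓑, ∀ B' ∈ 𝓑, B ≠ B' → #(B ∩ B') < t) (h𝓒 : ∀ B ∈ 𝓑, IsLaminar t (𝓒 B))
    (hsub : ∀ B ∈ 𝓑, ∀ A ∈ 𝓒 B, A ⊆ B) : IsLaminar t (𝓑.biUnion 𝓒) := by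
  simp only [IsLaminar, mem_biUnion]
  rintro A ⟨B, hB, hA⟩ A' ⟨B', hB', hA'⟩ hAA'
  obtain rfl | hBB' := eq_or_ne B B'
  · exact h𝓒 B hB A hA A' hA' hAA'
  · have := card_le_card (inter_subset_inter (hsub B hB A hA) (hsub B' hB' A' hA'))
    have := h𝓑 B hB B' hB' hBB'
    omega

lemma IsLaminar.exists_copy_in {t m : ℕ} {𝓖 : Finset (Finset (Fin m))} (h𝓖 : IsLaminar t 𝓖)
    (hbig : ∀ A ∈ 𝓖, t < #A) {B : Finset α} (hB : #B = m) :
    ∃ 𝓒 : Finset (Finset α), IsLaminar t 𝓒 ∧ (∀ A ∈ 𝓒, A ⊆ B ∧ t < #A) ∧ #𝓒 = #𝓖 := by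
  let f : Fin m ↪ α := (B.equivFinOfCardEq hB).symm.toEmbedding.trans (.subtype _)
  refine ⟨𝓖.image (·.map f), h𝓖.image_map f, ?_, card_image_of_injective _ (map_injective f)⟩
  simp only [forall_mem_image, card_map]
  refine fun A hA => ⟨fun x hx => ?_, hbig A hA⟩
  obtain ⟨i, -, rfl⟩ := mem_map.1 hx
  exact ((B.equivFinOfCardEq hB).symm i).2

end Laminar

section SteinerSystem

variable {α : Type*} [DecidableEq α]

/-- The Steiner system `S(t, m, |α|)`; for `t ≤ m`, "distinct blocks share fewer than `t` points"
is the uniqueness of the block through a `t`-set. -/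
structure IsSteinerSystem (t m : ℕ) (𝓑 : Finset (Finset α)) : Prop where
  card_eq : ∀ B ∈ 𝓑, #B = m
  card_inter_lt : ∀ B ∈ 𝓑, ∀ B' ∈ 𝓑, B ≠ B' → #(B ∩ B') < t
  exists_superset : ∀ T : Finset α, #T = t → ∃ B ∈ 𝓑, T ⊆ B

namespace IsSteinerSystem

variable {t m : ℕ} {𝓑 : Finset (Finset α)}

lemma image_map {β : Type*} [DecidableEq β] (h𝓑 : IsSteinerSystem t m 𝓑) (e : α ≃ β) :
    IsSteinerSystem t m (𝓑.image (·.map e.toEmbedding)) where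
  card_eq := by
    simpa only [forall_mem_image, card_map] using h𝓑.card_eq
  card_inter_lt := by
    simp only [forall_mem_image, ← map_inter, card_map]
    exact fun B hB B' hB' h => h𝓑.card_inter_lt B hB B' hB' (ne_of_apply_ne _ h)
  exists_superset T hT := by
    obtain ⟨B, hB, hTB⟩ := h𝓑.exists_superset (T.map e.symm.toEmbedding) (by rw [card_map, hT])
    refine ⟨B.map e.toEmbedding, mem_image_of_mem _ hB, ?_⟩
    simpa [← map_subset_map (f := e.toEmbedding), map_map] using hTB

lemma choose_le_card_mul [Fintype α] (h𝓑 : IsSteinerSystem t m 𝓑) :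
    (Fintype.card α).choose t ≤ #𝓑 * m.choose t := by
  have hcover : powersetCard t (univ : Finset α) ⊆ 𝓑.biUnion (powersetCard t) := by
    intro T hT
    obtain ⟨B, hB, hTB⟩ := h𝓑.exists_superset T (mem_powersetCard.1 hT).2
    exact mem_biUnion.2 ⟨B, hB, mem_powersetCard.2 ⟨hTB, (mem_powersetCard.1 hT).2⟩⟩
  calc (Fintype.card α).choose t = #(powersetCard t (univ : Finset α)) := by
        rw [card_powersetCard, card_univ]
    _ ≤ #(𝓑.biUnion (powersetCard t)) := card_le_card hcover
    _ ≤ #𝓑 * m.choose t := card_biUnion_le_card_mul _ _ _ fun B hB => by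
        rw [card_powersetCard, h𝓑.card_eq B hB]

lemma exists_laminar [Fintype α] (h𝓑 : IsSteinerSystem t m 𝓑) (hm : m < Fintype.card α)
    (ht : t < Fintype.card α) {𝓖 : Finset (Finset (Fin m))} (h𝓖 : IsLaminar t 𝓖)
    (hbig : ∀ A ∈ 𝓖, t < #A) :
    ∃ 𝓖' : Finset (Finset α), IsLaminar t 𝓖' ∧ (∀ A ∈ 𝓖', t < #A) ∧ #𝓖' = 1 + #𝓑 * #𝓖 := by
  choose! 𝓒 h𝓒 hsub hcard using fun B hB => h𝓖.exists_copy_in hbig (h𝓑.card_eq B hB)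
  have hdisj : (𝓑 : Set (Finset α)).PairwiseDisjoint 𝓒 := by
    intro B hB B' hB' hBB'
    refine disjoint_left.2 fun A hA hA' => ?_
    have := card_le_card (subset_inter (hsub B hB A hA).1 (hsub B' hB' A hA').1)
    have := h𝓑.card_inter_lt B hB B' hB' hBB'
    have := (hsub B hB A hA).2
    omega
  have huniv : univ ∉ 𝓑.biUnion 𝓒 := by
    simp only [mem_biUnion, not_exists, not_and]
    intro B hB hmem
    have := card_le_card (hsub B hB univ hmem).1
    rw [card_univ, h𝓑.card_eq B hB] at this
    omega
  refine ⟨insert univ (𝓑.biUnion 𝓒), (IsLaminar.biUnion h𝓑.card_inter_lt h𝓒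
    fun B hB A hA => (hsub B hB A hA).1).insert_univ, ?_, ?_⟩
  · simp only [mem_insert, mem_biUnion, forall_eq_or_imp, card_univ]
    exact ⟨ht, fun A ⟨B, hB, hA⟩ => (hsub B hB A hA).2⟩
  · rw [card_insert_of_notMem huniv, card_biUnion hdisj, sum_congr rfl hcard, sum_const,
      smul_eq_mul, add_comm]

end IsSteinerSystem

end SteinerSystem

open Submodule

lemma LinearIndependent.pair_smul {K M : Type*} [Field K] [AddCommGroup M] [Module K M]
    {x y : M} (h : LinearIndependent K ![x, y]) {a b : K} (ha : a ≠ 0) (hb : b ≠ 0) :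
    LinearIndependent K ![a • x, b • y] := by
  rw [LinearIndependent.pair_iff] at h ⊢
  intro s t hst
  have := h (s * a) (t * b) (by simpa only [mul_smul] using hst)
  simpa [ha, hb] using this

lemma Submodule.span_pair_eq_of_mem {K M : Type*} [Field K] [AddCommGroup M] [Module K M]
    {x y u v : M} (hxy : LinearIndependent K ![x, y]) (hx : x ∈ span K {u, v})
    (hy : y ∈ span K {u, v}) : span K {x, y} = span K {u, v} := by
  have := Module.Finite.span_of_finite K (Set.toFinite {u, v})
  refine eq_of_le_of_finrank_le
    (span_le.2 (Set.insert_subset hx (Set.singleton_subset_iff.2 hy))) ?_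
  have hxy := finrank_span_eq_card hxy
  have huv := finrank_range_le_card (R := K) ![u, v]
  rw [Matrix.range_cons_cons_empty, Fintype.card_fin] at hxy huv
  unfold Set.finrank at huv
  omega

section BaerSubline

open scoped LinearAlgebra.Projectivization
open Projectivization

variable {K F : Type*} [Field K] [Field F] [Algebra K F]

/-- The points with a representative in `W`; for `W` the `K`-span of an `F`-basis of `F²` this is
a Baer subline, i.e. a circle of the inversive plane. -/
def baerSubline (W : Submodule K (F × F)) : Set (ℙ F (F × F)) :=
  {P | ∃ w ∈ W, ∃ hw : w ≠ 0, mk F w hw = P}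

lemma mk_smul_eq_mk {V : Type*} [AddCommGroup V] [Module F V] {c : F} {v : V} (hcv : c • v ≠ 0)
    (hv : v ≠ 0) : mk F (c • v) hcv = mk F v hv :=
  (mk_eq_mk_iff' F _ _ hcv hv).2 ⟨c, rfl⟩

lemma mem_baerSubline_iff {W : Submodule K (F × F)} {P : ℙ F (F × F)} :
    P ∈ baerSubline W ↔ ∃ c : F, c ≠ 0 ∧ c • P.rep ∈ W := by
  constructor
  · rintro ⟨w, hw, hw0, rfl⟩
    obtain ⟨a, ha⟩ := exists_smul_eq_mk_rep F w hw0
    refine ⟨(a⁻¹ : Fˣ), Units.ne_zero _, ?_⟩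
    change (a⁻¹ : Fˣ) • _ ∈ W
    rwa [← ha, inv_smul_smul]
  · rintro ⟨c, hc, hcP⟩
    exact ⟨_, hcP, smul_ne_zero hc P.rep_nonzero, (mk_smul_eq_mk _ P.rep_nonzero).trans P.mk_rep⟩

lemma baerSubline_span_smul_pair {c : F} (hc : c ≠ 0) (x y : F × F) :
    baerSubline (span K {c • x, c • y}) = baerSubline (span K {x, y}) := by
  have hmem : ∀ z, z ∈ span K {c • x, c • y} ↔ c⁻¹ • z ∈ span K {x, y} := by
    intro z
    simp only [mem_span_pair, smul_comm _ c, ← smul_add, eq_inv_smul_iff₀ hc]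
  ext P
  simp only [mem_baerSubline_iff, hmem, smul_smul]
  constructor
  · rintro ⟨d, hd, h⟩
    exact ⟨_, mul_ne_zero (inv_ne_zero hc) hd, h⟩
  · rintro ⟨d, hd, h⟩
    exact ⟨c * d, mul_ne_zero hc hd, by rwa [inv_mul_cancel_left₀ hc]⟩

lemma baerSubline_span_eq_of_smul_mem {u v w₁ w₂ : F × F} (hw : LinearIndependent F ![w₁, w₂])
    {c₁ c₂ c₃ : F} (hc₁ : c₁ ≠ 0) (hc₂ : c₂ ≠ 0) (hc₃ : c₃ ≠ 0) (h₁ : c₁ • w₁ ∈ span K {u, v})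
    (h₂ : c₂ • w₂ ∈ span K {u, v}) (h₃ : c₃ • (w₁ + w₂) ∈ span K {u, v}) :
    baerSubline (span K {u, v}) = baerSubline (span K {w₁, w₂}) := by
  have hW := span_pair_eq_of_mem ((hw.pair_smul hc₁ hc₂).restrict_scalars' K) h₁ h₂
  rw [← hW, mem_span_pair] at h₃
  obtain ⟨a, b, hab⟩ := h₃
  -- comparing coefficients in `c₃ • (w₁ + w₂) = a • c₁ • w₁ + b • c₂ • w₂` shows that the subspace
  -- is `c₃ • span K {a⁻¹ • w₁, b⁻¹ • w₂}`
  obtain ⟨ha, hb⟩ : algebraMap K F a * c₁ = c₃ ∧ algebraMap K F b * c₂ = c₃ :=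
    hw.eq_of_pair (by rw [← smul_add, ← hab, ← algebraMap_smul F a, ← algebraMap_smul F b,
      smul_smul, smul_smul])
  have ha0 : a ≠ 0 := by rintro rfl; simp [eq_comm, hc₃] at ha
  have hb0 : b ≠ 0 := by rintro rfl; simp [eq_comm, hc₃] at hb
  have hw₁ : c₁ • w₁ = c₃ • a⁻¹ • w₁ := by
    rw [← ha, ← algebraMap_smul F a⁻¹, smul_smul, map_inv₀, mul_comm _ c₁,
      mul_inv_cancel_right₀ (by simpa using ha0)]
  have hw₂ : c₂ • w₂ = c₃ • b⁻¹ • w₂ := by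
    rw [← hb, ← algebraMap_smul F b⁻¹, smul_smul, map_inv₀, mul_comm _ c₂,
      mul_inv_cancel_right₀ (by simpa using hb0)]
  rw [← hW, hw₁, hw₂, baerSubline_span_smul_pair hc₃, span_pair_eq_of_mem (u := w₁) (v := w₂)
    ((hw.restrict_scalars' K).pair_smul (inv_ne_zero ha0) (inv_ne_zero hb0))
    (smul_mem _ _ (subset_span (by simp))) (smul_mem _ _ (subset_span (by simp)))]

lemma mem_range_algebraMap_of_smul_mem_span {u v w : F × F} (huv : LinearIndependent F ![u, v])
    (hw : w ∈ span K {u, v}) (hw0 : w ≠ 0) {c : F} (hcw : c • w ∈ span K {u, v}) :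
    c ∈ (algebraMap K F).range := by
  obtain ⟨a, b, rfl⟩ := mem_span_pair.1 hw
  obtain ⟨a', b', h⟩ := mem_span_pair.1 hcw
  obtain ⟨ha', hb'⟩ : algebraMap K F a' = c * algebraMap K F a ∧
      algebraMap K F b' = c * algebraMap K F b :=
    huv.eq_of_pair (by rw [algebraMap_smul, algebraMap_smul, h, smul_add, ← algebraMap_smul F a,
      ← algebraMap_smul F b, smul_smul, smul_smul])
  by_cases ha : a = 0
  · have hb : b ≠ 0 := by rintro rfl; simp [ha] at hw0
    exact ⟨b' / b, by rw [map_div₀, hb', mul_div_cancel_right₀ _ (by simpa using hb)]⟩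
  · exact ⟨a' / a, by rw [map_div₀, ha', mul_div_cancel_right₀ _ (by simpa using ha)]⟩

lemma natCard_baerSubline [Finite K] {u v : F × F} (huv : LinearIndependent F ![u, v]) :
    Nat.card (baerSubline (span K {u, v})) = Nat.card K + 1 := by
  set W := span K {u, v}
  let f : W →ₛₗ[algebraMap K F] F × F :=
    { toFun := Subtype.val
      map_add' := fun _ _ => rfl
      map_smul' := fun a w => (algebraMap_smul F a (w : F × F)).symm }
  have hf : Function.Injective f := Subtype.val_injective
  have hrange : Set.range (map f hf) = baerSubline W := by
    ext P
    constructor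
    · rintro ⟨Q, rfl⟩
      induction Q using ind with | h w hw =>
      exact ⟨w, w.2, _, (map_mk f hf w hw).symm⟩
    · rintro ⟨w, hw, hw0, rfl⟩
      exact ⟨mk K ⟨w, hw⟩ (by simpa using hw0), map_mk f hf _ _⟩
  have hinj : Function.Injective (map f hf) := by
    intro P Q h
    induction P using ind with | h w hw =>
    induction Q using ind with | h w' hw' =>
    rw [map_mk, map_mk, mk_eq_mk_iff'] at h
    obtain ⟨c, hc : c • (w' : F × F) = w⟩ := h
    obtain ⟨k, rfl⟩ := mem_range_algebraMap_of_smul_mem_span huv w'.2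
      (by simpa using hw') (hc ▸ w.2)
    exact (mk_eq_mk_iff' K _ _ hw hw').2 ⟨k, Subtype.ext (by simpa [algebraMap_smul] using hc)⟩
  have hrank : Module.finrank K W = 2 := by
    have := finrank_span_eq_card (huv.restrict_scalars' K)
    rwa [Matrix.range_cons_cons_empty, Fintype.card_fin] at this
  rw [← hrange, Nat.card_range_of_injective hinj, card_of_finrank_two K W hrank]

/-- Three distinct points lie on exactly one Baer subline. -/
lemma exists_baerSubline_eq_iff {P₁ P₂ P₃ : ℙ F (F × F)} (h₁₂ : P₁ ≠ P₂) (h₁₃ : P₁ ≠ P₃)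
    (h₂₃ : P₂ ≠ P₃) :
    ∃ w₁ w₂ : F × F, LinearIndependent F ![w₁, w₂] ∧ ∀ u v : F × F,
      ({P₁, P₂, P₃} ⊆ baerSubline (span K {u, v}) ↔
        baerSubline (span K {u, v}) = baerSubline (span K {w₁, w₂})) := by
  have hv : LinearIndependent F ![P₁.rep, P₂.rep] := linearIndependent_pair_iff_ne.2 h₁₂
  have htop : span F {P₁.rep, P₂.rep} = ⊤ := by
    rw [← Matrix.range_cons_cons_empty]
    exact hv.span_eq_top_of_card_eq_finrank' (by simp)
  obtain ⟨s, t, hst⟩ := mem_span_pair.1 (htop ▸ mem_top : P₃.rep ∈ span F {P₁.rep, P₂.rep})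
  have hs : s ≠ 0 := by
    rintro rfl
    refine h₂₃ (Eq.symm ?_)
    rw [← P₂.mk_rep, ← P₃.mk_rep, mk_eq_mk_iff']
    exact ⟨t, by simpa using hst⟩
  have ht : t ≠ 0 := by
    rintro rfl
    refine h₁₃ (Eq.symm ?_)
    rw [← P₁.mk_rep, ← P₃.mk_rep, mk_eq_mk_iff']
    exact ⟨s, by simpa using hst⟩
  refine ⟨s • P₁.rep, t • P₂.rep, hv.pair_smul hs ht, fun u v => ⟨fun h => ?_, fun h => ?_⟩⟩
  · simp only [Set.insert_subset_iff, Set.singleton_subset_iff, mem_baerSubline_iff] at h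
    obtain ⟨⟨c₁, hc₁, h₁⟩, ⟨c₂, hc₂, h₂⟩, ⟨c₃, hc₃, h₃⟩⟩ := h
    refine baerSubline_span_eq_of_smul_mem (hv.pair_smul hs ht) (c₁ := c₁ / s) (c₂ := c₂ / t)
      (div_ne_zero hc₁ hs) (div_ne_zero hc₂ ht) hc₃ ?_ ?_ (by rwa [hst])
    · rwa [smul_smul, div_mul_cancel₀ _ hs]
    · rwa [smul_smul, div_mul_cancel₀ _ ht]
  · simp only [h, Set.insert_subset_iff, Set.singleton_subset_iff, mem_baerSubline_iff]
    exact ⟨⟨s, hs, subset_span (by simp)⟩, ⟨t, ht, subset_span (by simp)⟩,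
      ⟨1, one_ne_zero, by
        rw [one_smul, ← hst]; exact add_mem (subset_span (by simp)) (subset_span (by simp))⟩⟩

theorem exists_isSteinerSystem_baerSubline (K F : Type*) [Field K] [Field F] [Algebra K F]
    [Finite F] {α : Type*} [Fintype α] [DecidableEq α] (hα : Fintype.card α = Nat.card F + 1) :
    ∃ 𝓑 : Finset (Finset α), IsSteinerSystem 3 (Nat.card K + 1) 𝓑 := by
  classical
  have : Finite K := Finite.of_injective _ (algebraMap K F).injective
  have : Fintype F := Fintype.ofFinite F
  have : Fintype (ℙ F (F × F)) := Fintype.ofFinite _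
  let e : ℙ F (F × F) ≃ α := Fintype.equivOfCardEq (by
    rw [hα, Fintype.card_eq_nat_card, card_of_finrank_two F (F × F) (by simp)])
  let 𝓑 : Finset (Finset (ℙ F (F × F))) :=
    (Finset.univ.filter fun p : (F × F) × (F × F) => LinearIndependent F ![p.1, p.2]).image
      fun p => (baerSubline (K := K) (span K {p.1, p.2})).toFinset
  refine ⟨𝓑.image (·.map e.toEmbedding), IsSteinerSystem.image_map ⟨?_, ?_, ?_⟩ e⟩
  · simp only [𝓑, Finset.forall_mem_image, Finset.mem_filter, Finset.mem_univ, true_and,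
      Set.toFinset_card, Fintype.card_eq_nat_card]
    exact fun p hp => natCard_baerSubline hp
  · simp only [𝓑, Finset.forall_mem_image, Finset.mem_filter, Finset.mem_univ, true_and]
    intro p hp p' hp' hne
    by_contra! h3
    obtain ⟨T, hT, hT3⟩ := Finset.exists_subset_card_eq h3
    obtain ⟨P₁, P₂, P₃, h₁₂, h₁₃, h₂₃, rfl⟩ := Finset.card_eq_three.1 hT3
    obtain ⟨w₁, w₂, -, hw⟩ := exists_baerSubline_eq_iff (K := K) h₁₂ h₁₃ h₂₃
    rw [Finset.subset_inter_iff, Set.subset_toFinset, Set.subset_toFinset] at hT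
    push_cast at hT
    exact hne (by rw [(hw _ _).1 hT.1, (hw _ _).1 hT.2])
  · intro T hT
    obtain ⟨P₁, P₂, P₃, h₁₂, h₁₃, h₂₃, rfl⟩ := Finset.card_eq_three.1 hT
    obtain ⟨w₁, w₂, hw, h⟩ := exists_baerSubline_eq_iff (K := K) h₁₂ h₁₃ h₂₃
    refine ⟨_, Finset.mem_image_of_mem _ (Finset.mem_filter.2 ⟨Finset.mem_univ (w₁, w₂), hw⟩), ?_⟩
    rw [Set.subset_toFinset]
    push_cast
    exact (h w₁ w₂).2 rfl

end BaerSubline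

theorem exists_laminar_three_pow_two_pow (r : ℕ) :
    ∃ 𝓖 : Finset (Finset (Fin (3 ^ 2 ^ r + 1))), IsLaminar 3 𝓖 ∧ (∀ A ∈ 𝓖, 3 < #A) ∧
      ((3 ^ 2 ^ r + 1).choose 3 : ℝ) *
          ∑ i ∈ range (r + 1), 1 / (((3 ^ 2 ^ i + 1).choose 3 : ℕ) : ℝ) ≤ #𝓖 := by
  induction r with
  | zero => exact ⟨{univ}, fun A hA B hB _ => by simp_all, by simp, by norm_num⟩
  | succ r ih =>
    obtain ⟨𝓖, h𝓖, hbig, hcard⟩ := ih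
    have hq : 3 ^ 2 ^ (r + 1) = (3 ^ 2 ^ r) ^ 2 := by rw [pow_succ, pow_mul]
    have h3q : 3 ≤ 3 ^ 2 ^ r := Nat.le_self_pow (by positivity) 3
    let K := GaloisField 3 (2 ^ r)
    have hK : Nat.card K = 3 ^ 2 ^ r := GaloisField.card 3 _ (by positivity)
    obtain ⟨𝓑, h𝓑⟩ := exists_isSteinerSystem_baerSubline K (FiniteField.Extension K 3 2)
      (α := Fin (3 ^ 2 ^ (r + 1) + 1))
      (by rw [Fintype.card_fin, FiniteField.natCard_extension, hK, hq])
    rw [hK] at h𝓑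
    obtain ⟨𝓖', h𝓖', hbig', hcard'⟩ := h𝓑.exists_laminar (by rw [Fintype.card_fin, hq]; nlinarith)
      (by rw [Fintype.card_fin, hq]; nlinarith) h𝓖 hbig
    refine ⟨𝓖', h𝓖', hbig', ?_⟩
    have hcover : (((3 ^ 2 ^ (r + 1) + 1).choose 3 : ℕ) : ℝ) ≤
        #𝓑 * ((3 ^ 2 ^ r + 1).choose 3 : ℕ) := by
      exact_mod_cast Fintype.card_fin _ ▸ h𝓑.choose_le_card_mul
    have hpos : (0 : ℝ) < ((3 ^ 2 ^ (r + 1) + 1).choose 3 : ℕ) := by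
      exact_mod_cast Nat.choose_pos (by rw [hq]; nlinarith)
    have hS : 0 ≤ ∑ i ∈ range (r + 1), 1 / (((3 ^ 2 ^ i + 1).choose 3 : ℕ) : ℝ) := by positivity
    rw [sum_range_succ, mul_add, mul_one_div_cancel hpos.ne', hcard']
    generalize ∑ i ∈ range (r + 1), 1 / (((3 ^ 2 ^ i + 1).choose 3 : ℕ) : ℝ) = S at hcard hS ⊢
    calc _ ≤ #𝓑 * ((3 ^ 2 ^ r + 1).choose 3 : ℕ) * S + 1 := by gcongr
      _ ≤ #𝓑 * #𝓖 + 1 := by rw [mul_assoc]; gcongr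
      _ = _ := by push_cast; ring

lemma card_biUnion_powersetCard_range {α : Type*} [DecidableEq α] (s : Finset α) (t : ℕ) :
    #((range (t + 1)).biUnion fun k => powersetCard k s) = ∑ k ∈ range (t + 1), (#s).choose k := by
  rw [card_biUnion fun i _ j _ hij => pairwise_disjoint_powersetCard s hij]
  simp only [card_powersetCard]

/-- For n = 3^(2^r) + 1 there is a 3-laminar family on `[n]` of the stated size. -/
theorem exists_large_three_laminar (r n : ℕ) (hn : n = 3 ^ (2 ^ r) + 1) :
    ∃ F : Finset (Finset (Fin n)),
      (∀ A ∈ F, ∀ B ∈ F, 3 ≤ (A ∩ B).card → A ⊆ B ∨ B ⊆ A) ∧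
      1 + (n.choose 1 : ℝ) + (n.choose 2 : ℝ) +
          (n.choose 3 : ℝ) *
            (1 + ∑ i ∈ Finset.range (r + 1),
              1 / (((3 ^ (2 ^ i) + 1).choose 3 : ℕ) : ℝ)) ≤
        (F.card : ℝ) := by
  subst hn
  obtain ⟨𝓖, h𝓖, hbig, hcard⟩ := exists_laminar_three_pow_two_pow r
  let 𝓢 := (range (3 + 1)).biUnion fun k => powersetCard k (univ : Finset (Fin (3 ^ 2 ^ r + 1)))
  have h𝓢 : ∀ A ∈ 𝓢, #A ≤ 3 := by
    simp only [𝓢, mem_biUnion, mem_range, mem_powersetCard]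
    omega
  have hdisj : Disjoint 𝓖 𝓢 := disjoint_left.2 fun A hA hA' => by
    have := hbig A hA; have := h𝓢 A hA'; omega
  refine ⟨𝓖 ∪ 𝓢, h𝓖.union_of_card_le h𝓢, ?_⟩
  rw [card_union_of_disjoint hdisj, card_biUnion_powersetCard_range, card_univ, Fintype.card_fin]
  generalize ∑ i ∈ range (r + 1), 1 / (((3 ^ 2 ^ i + 1).choose 3 : ℕ) : ℝ) = S at hcard ⊢
  simp only [sum_range_succ, sum_range_zero, Nat.choose_zero_right]
  push_cast
  linarith
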